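/- (Existence and uniqueness of T-k-th roots) For every symmetric T-positive semidefinite tensor A ∈ ℝ^{n×n×p} and every integer k ≥ 1, there exists a unique symmetric T-positive semidefinite tensor B ∈ ℝ^{n×n×p} with B^k = A, where B^k denotes the k-fold T-product. -/

import Mathlib

open Matrix BigOperators

variable {p : ℕ}

/-- Block circulant matrix of a third-order tensor (tensor = family of frontal slices). -/
def bcirc {I J : Type*} (A : Fin p → Matrix I J ℝ) :
    Matrix (Fin p × I) (Fin p × J) ℝ :=
  Matrix.of fun ik jl => A (ik.1 - jl.1) ik.2 jl.2

/-- T-product of third-order tensors: `(A*B)^(k) = Σ_j A^(k-j) B^(j)` (indices mod p),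
which is exactly `fold(bcirc(A) · unfold(B))`. -/
def tProd {I J K : Type*} [Fintype J] (A : Fin p → Matrix I J ℝ)
    (B : Fin p → Matrix J K ℝ) : Fin p → Matrix I K ℝ :=
  fun k => ∑ j : Fin p, A (k - j) * B j

/-- Tensor transpose: transpose each frontal slice and reverse slices 2..p. -/
def ttrans {I J : Type*} (A : Fin p → Matrix I J ℝ) :
    Fin p → Matrix J I ℝ :=
  fun k => (A (-k))ᵀ

/-- Identity tensor: first frontal slice the identity matrix, other slices zero. -/
def tid (I : Type*) [DecidableEq I] [NeZero p] : Fin p → Matrix I I ℝ :=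
  fun k => if k = 0 then 1 else 0

/-- Entrywise (Frobenius) inner product of third-order tensors. -/
def tinner {I J : Type*} [Fintype I] [Fintype J]
    (X Y : Fin p → Matrix I J ℝ) : ℝ :=
  ∑ k, ∑ i, ∑ j, X k i j * Y k i j

/-- Symmetric T-positive semidefinite tensor. -/
def TPSD {I : Type*} [Fintype I] (A : Fin p → Matrix I I ℝ) : Prop :=
  ttrans A = A ∧ ∀ X : Fin p → Matrix I (Fin 1) ℝ, 0 ≤ tinner X (tProd A X)

/-- Symmetric T-positive definite tensor. -/
def TPD {I : Type*} [Fintype I] (A : Fin p → Matrix I I ℝ) : Prop :=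
  ttrans A = A ∧ ∀ X : Fin p → Matrix I (Fin 1) ℝ, X ≠ 0 → 0 < tinner X (tProd A X)

/-- k-fold T-product power of a tensor, with `tpow A 0` the identity tensor. -/
def tpow {I : Type*} [Fintype I] [DecidableEq I] [NeZero p]
    (A : Fin p → Matrix I I ℝ) : ℕ → Fin p → Matrix I I ℝ
  | 0 => tid I
  | k + 1 => tProd A (tpow A k)

/-!
Under `bcirc`, the T-product becomes the matrix product and the tensor transpose the matrix
transpose, while the quadratic form `⟨X, A * X⟩` becomes that of `bcirc A` on `unfold X`; so `A` is
T-PSD iff `bcirc A` is PSD, and `bcirc` is injective. The PSD `k`-th root `M = (bcirc A) ^ (1/k)`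
of a PSD matrix is unique, so `M` is invariant under the simultaneous cyclic shift of the block
indices, which fixes `bcirc A`; a shift-invariant matrix is block circulant, hence `M = bcirc B`
and `B` is the unique T-PSD `k`-th root of `A`.
-/

namespace CFC

variable {A : Type*} [PartialOrder A] [Ring A] [StarRing A] [TopologicalSpace A]
  [StarOrderedRing A] [Algebra ℝ A] [ContinuousFunctionalCalculus ℝ A IsSelfAdjoint]
  [NonnegSpectrumClass ℝ A] [IsSemitopologicalRing A] [T2Space A]

lemma rpow_inv_natCast_pow (a : A) {k : ℕ} (hk : k ≠ 0) (ha : 0 ≤ a := by cfc_tac) :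
    (a ^ (k⁻¹ : ℝ)) ^ k = a := by
  rw [← rpow_natCast _ k, rpow_rpow_of_exponent_nonneg a _ _ (by positivity) (by positivity),
    inv_mul_cancel₀ (by exact_mod_cast hk), rpow_one a]

lemma pow_rpow_inv_natCast (a : A) {k : ℕ} (hk : k ≠ 0) (ha : 0 ≤ a := by cfc_tac) :
    (a ^ k) ^ (k⁻¹ : ℝ) = a := by
  rw [← rpow_natCast a k, rpow_rpow_of_exponent_nonneg a _ _ (by positivity) (by positivity),
    mul_inv_cancel₀ (by exact_mod_cast hk), rpow_one a]

end CFC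

namespace Matrix.PosSemidef

open scoped ComplexOrder MatrixOrder

variable {𝕜 m : Type*} [RCLike 𝕜] [Fintype m] [DecidableEq m]

lemma exists_pow_eq {N : Matrix m m 𝕜} (hN : N.PosSemidef) {k : ℕ} (hk : k ≠ 0) :
    ∃ M : Matrix m m 𝕜, M.PosSemidef ∧ M ^ k = N :=
  ⟨N ^ (k⁻¹ : ℝ), nonneg_iff_posSemidef.mp CFC.rpow_nonneg,
    CFC.rpow_inv_natCast_pow N hk (nonneg_iff_posSemidef.mpr hN)⟩

lemma eq_of_pow_eq_pow {M N : Matrix m m 𝕜} (hM : M.PosSemidef) (hN : N.PosSemidef) {k : ℕ}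
    (hk : k ≠ 0) (h : M ^ k = N ^ k) : M = N := by
  rw [← CFC.pow_rpow_inv_natCast M hk (nonneg_iff_posSemidef.mpr hM), h,
    CFC.pow_rpow_inv_natCast N hk (nonneg_iff_posSemidef.mpr hN)]

end Matrix.PosSemidef

lemma Matrix.submatrix_equiv_pow {R m : Type*} [CommSemiring R] [Fintype m] [DecidableEq m]
    (M : Matrix m m R) (e : m ≃ m) (k : ℕ) : M.submatrix e e ^ k = (M ^ k).submatrix e e := by
  simpa using (map_pow (reindexAlgEquiv R R e.symm) M k).symm

def unfoldEquiv (p : ℕ) (I : Type*) : (Fin p → Matrix I (Fin 1) ℝ) ≃ (Fin p × I → ℝ) where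
  toFun X q := X q.1 q.2 0
  invFun x c := of fun i _ => x (c, i)
  left_inv X := by ext c i j; fin_cases j; rfl
  right_inv x := rfl

section Bcirc

variable {I J K : Type*}

lemma bcirc_injective [NeZero p] : Function.Injective (bcirc : (Fin p → Matrix I J ℝ) → _) := by
  intro A B h
  ext c i j
  simpa [bcirc] using congr_fun₂ h (c, i) (0, j)

lemma bcirc_tProd [Fintype J] [NeZero p] (A : Fin p → Matrix I J ℝ) (B : Fin p → Matrix J K ℝ) :
    bcirc (tProd A B) = bcirc A * bcirc B := by
  ext ⟨k, i⟩ ⟨l, j⟩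
  simp only [bcirc, of_apply, tProd, Matrix.sum_apply, mul_apply, Fintype.sum_prod_type]
  refine Fintype.sum_equiv (Equiv.addRight l) _ _ fun c => Finset.sum_congr rfl fun t _ => ?_
  simp only [Equiv.coe_addRight, add_sub_cancel_right, sub_add_eq_sub_sub, sub_right_comm]

lemma bcirc_tid [DecidableEq I] [NeZero p] : bcirc (tid I) = (1 : Matrix (Fin p × I) _ ℝ) := by
  ext ⟨k, i⟩ ⟨l, j⟩
  by_cases h : k = l <;> simp [bcirc, tid, one_apply, sub_eq_zero, h]

lemma bcirc_tpow [Fintype I] [DecidableEq I] [NeZero p] (A : Fin p → Matrix I I ℝ) (k : ℕ) :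
    bcirc (tpow A k) = bcirc A ^ k := by
  induction k with
  | zero => exact bcirc_tid
  | succ k ih => rw [tpow, bcirc_tProd, ih, pow_succ']

lemma bcirc_ttrans [NeZero p] (A : Fin p → Matrix I J ℝ) : bcirc (ttrans A) = (bcirc A)ᵀ := by
  ext ⟨k, i⟩ ⟨l, j⟩
  simp [bcirc, ttrans, neg_sub]

lemma tinner_tProd_eq_dotProduct [Fintype I] (A : Fin p → Matrix I I ℝ)
    (X : Fin p → Matrix I (Fin 1) ℝ) :
    tinner X (tProd A X) = unfoldEquiv p I X ⬝ᵥ bcirc A *ᵥ unfoldEquiv p I X := by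
  simp only [tinner, tProd, Matrix.sum_apply, mul_apply, Fin.sum_univ_one, dotProduct, mulVec,
    bcirc, of_apply, Fintype.sum_prod_type]
  rfl

lemma tpsd_iff_posSemidef_bcirc [Fintype I] [NeZero p] (A : Fin p → Matrix I I ℝ) :
    TPSD A ↔ (bcirc A).PosSemidef := by
  rw [posSemidef_iff_dotProduct_mulVec, IsHermitian, conjTranspose_eq_transpose_of_trivial,
    ← bcirc_ttrans, bcirc_injective.eq_iff, TPSD]
  refine and_congr_right' ((unfoldEquiv p I).forall_congr fun {X} => ?_)
  rw [tinner_tProd_eq_dotProduct, star_trivial]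

end Bcirc

def blockShift (p : ℕ) [NeZero p] (I : Type*) : Fin p × I ≃ Fin p × I :=
  (Equiv.addRight 1).prodCongr (Equiv.refl I)

section BlockShift

variable {I J : Type*} [NeZero p]

lemma bcirc_submatrix_blockShift (A : Fin p → Matrix I J ℝ) :
    (bcirc A).submatrix (blockShift p I) (blockShift p J) = bcirc A := by
  ext ⟨k, i⟩ ⟨l, j⟩
  simp [bcirc, blockShift]

open Fin.NatCast in
lemma eq_bcirc_of_submatrix_blockShift {M : Matrix (Fin p × I) (Fin p × J) ℝ}
    (h : M.submatrix (blockShift p I) (blockShift p J) = M) :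
    M = bcirc fun c => of fun i j => M (c, i) (0, j) := by
  have hshift : ∀ (s : ℕ) (k l : Fin p) (i : I) (j : J),
      M (k + s, i) (l + s, j) = M (k, i) (l, j) := by
    intro s
    induction s with
    | zero => simp
    | succ s ih =>
      intro k l i j
      simpa [blockShift, Nat.cast_succ, ← add_assoc, ih] using congr_fun₂ h (k + s, i) (l + s, j)
  ext ⟨k, i⟩ ⟨l, j⟩
  simpa [bcirc] using hshift l (k - l) 0 i j

lemma eq_bcirc_of_pow_eq_bcirc [Fintype I] [DecidableEq I] {M : Matrix (Fin p × I) (Fin p × I) ℝ}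
    (hM : M.PosSemidef) {k : ℕ} (hk : k ≠ 0) {A : Fin p → Matrix I I ℝ} (hMk : M ^ k = bcirc A) :
    M = bcirc fun c => of fun i j => M (c, i) (0, j) := by
  refine eq_bcirc_of_submatrix_blockShift ((hM.submatrix _).eq_of_pow_eq_pow hM hk ?_)
  rw [submatrix_equiv_pow, hMk, bcirc_submatrix_blockShift]

end BlockShift

/-- existence and uniqueness of T-k-th roots of a symmetric T-PSD tensor. -/
theorem tpsd_kth_root {n p : ℕ} [NeZero p] (A : Fin p → Matrix (Fin n) (Fin n) ℝ)
    (hA : TPSD A) (k : ℕ) (hk : 1 ≤ k) :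
    ∃! B : Fin p → Matrix (Fin n) (Fin n) ℝ, TPSD B ∧ tpow B k = A := by
  have hk0 : k ≠ 0 := Nat.one_le_iff_ne_zero.mp hk
  obtain ⟨M, hM, hMk⟩ := ((tpsd_iff_posSemidef_bcirc A).mp hA).exists_pow_eq hk0
  obtain ⟨B, rfl⟩ : ∃ B, bcirc B = M := ⟨_, (eq_bcirc_of_pow_eq_bcirc hM hk0 hMk).symm⟩
  refine ⟨B, ⟨(tpsd_iff_posSemidef_bcirc B).mpr hM, bcirc_injective ?_⟩, ?_⟩
  · rw [bcirc_tpow, hMk]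
  · rintro C ⟨hC, hCk⟩
    refine bcirc_injective (((tpsd_iff_posSemidef_bcirc C).mp hC).eq_of_pow_eq_pow hM hk0 ?_)
    rw [← bcirc_tpow, hCk, hMk]
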